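/- Let F(z) = Σ_{n=0}^∞ c_n z^n be analytic on the open unit disc with real coefficients c_n satisfying Σ_{n=1}^∞ |c_n|/n^k < ∞ for some k ∈ ℕ, and set U(z) = Re F(z). Suppose there exist θ₀ ∈ (0,π) and g ∈ L¹(−θ₀,θ₀) such that U(re^{iθ}) ≥ g(θ) for a.e. θ ∈ (−θ₀,θ₀) and all r ∈ [0,1). Then sup_{0<r<1} ∫_{−θ₀/2}^{θ₀/2} |U(re^{iθ})| dθ < ∞. -/

import Mathlib

/-!
Weight the circle means by the bump `p(θ) = (θ₀² - θ²)^k`, which vanishes to order `k`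
at `±θ₀`, so that `k` integrations by parts give `|∫_{-θ₀}^{θ₀} p(θ) cos nθ dθ| = O(n^{-k})`.
Expanding `U(re^{iθ}) = Σ cₙ rⁿ cos nθ` and integrating termwise, `Σ |cₙ|/n^k < ∞` bounds
`∫ U(re^{iθ}) p(θ) dθ` uniformly in `r`. As `|U| = U + 2U⁻` with `U⁻ ≤ |g|`, the same holds
for `∫ |U(re^{iθ})| p(θ) dθ`, and `p` is bounded below on `(-θ₀/2, θ₀/2)`.
-/

open MeasureTheory Filter Set Polynomial Complex

namespace Polynomial

theorem isRoot_iterate_derivative_of_pow_dvd {p : ℝ[X]} {t : ℝ} {n m : ℕ}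
    (h : (X - C t) ^ n ∣ p) (hm : m < n) : (derivative^[m] p).IsRoot t :=
  dvd_iff_isRoot.mp <| (dvd_pow_self _ (Nat.sub_ne_zero_of_lt hm)).trans
    (pow_sub_dvd_iterate_derivative_of_pow_dvd m h)

theorem integral_eval_mul_cexp_of_isRoot {a b t : ℝ} (ht : t ≠ 0) {p : ℝ[X]}
    (ha : p.IsRoot a) (hb : p.IsRoot b) :
    ∫ x in a..b, ((p.eval x : ℝ) : ℂ) * cexp (t * x * I) =
      -(∫ x in a..b, ((p.derivative.eval x : ℝ) : ℂ) * cexp (t * x * I)) / (t * I) := by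
  have htI : (t : ℂ) * I ≠ 0 := mul_ne_zero (ofReal_ne_zero.mpr ht) I_ne_zero
  have hexp (x : ℝ) :
      HasDerivAt (fun y : ℝ => cexp (t * y * I) / (t * I)) (cexp (t * x * I)) x := by
    have := (((ofRealCLM.hasDerivAt (x := x)).const_mul (t : ℂ)).mul_const I).cexp.div_const
      ((t : ℂ) * I)
    simpa [mul_assoc, htI] using this
  rw [intervalIntegral.integral_mul_deriv_eq_deriv_mul (fun x _ => (p.hasDerivAt x).ofReal_comp)
    (fun x _ => hexp x)
    ((by fun_prop : Continuous fun x : ℝ => ((p.derivative.eval x : ℝ) : ℂ)).intervalIntegrable _ _)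
    ((by fun_prop : Continuous fun x : ℝ => cexp (t * x * I)).intervalIntegrable _ _)]
  simp only [ha.eq_zero, hb.eq_zero, ofReal_zero, zero_mul, sub_self, zero_sub, neg_div,
    ← intervalIntegral.integral_div, mul_div_assoc]

theorem norm_integral_eval_mul_cexp_le {a b t B : ℝ} (hab : a ≤ b) (ht : t ≠ 0) (m : ℕ)
    (p : ℝ[X]) (hroot : ∀ j < m, (derivative^[j] p).IsRoot a ∧ (derivative^[j] p).IsRoot b)
    (hB : ∀ x ∈ Icc a b, |(derivative^[m] p).eval x| ≤ B) :
    ‖∫ x in a..b, ((p.eval x : ℝ) : ℂ) * cexp (t * x * I)‖ ≤ (b - a) * B / |t| ^ m := by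
  induction m generalizing p with
  | zero =>
    have hbound : ∀ x ∈ uIoc a b, ‖((p.eval x : ℝ) : ℂ) * cexp (t * x * I)‖ ≤ B := by
      intro x hx
      have : ‖cexp (t * x * I)‖ = 1 := by exact_mod_cast norm_exp_ofReal_mul_I (t * x)
      rw [uIoc_of_le hab] at hx
      simpa [this] using hB x (Ioc_subset_Icc_self hx)
    simpa [abs_of_nonneg (sub_nonneg.mpr hab), mul_comm] using
      intervalIntegral.norm_integral_le_of_norm_le_const hbound
  | succ m ih =>
    obtain ⟨ha, hb⟩ : p.IsRoot a ∧ p.IsRoot b := hroot 0 m.succ_pos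
    rw [integral_eval_mul_cexp_of_isRoot ht ha hb, norm_div, norm_neg, norm_mul, norm_I,
      mul_one, norm_real, Real.norm_eq_abs, pow_succ, ← div_div]
    gcongr
    exact ih p.derivative (fun j hj => hroot (j + 1) (by omega)) hB

end Polynomial

theorem abs_intervalIntegral_re_le_norm {f : ℝ → ℂ} {a b : ℝ}
    (hf : IntervalIntegrable f volume a b) :
    |∫ x in a..b, (f x).re| ≤ ‖∫ x in a..b, f x‖ := by
  have := intervalIntegral.intervalIntegral_re hf
  simp only [RCLike.re_to_complex] at this
  exact this ▸ abs_re_le_norm _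

noncomputable def bumpPoly (θ₀ : ℝ) (k : ℕ) : ℝ[X] := (C (θ₀ ^ 2) - X ^ 2) ^ k

@[simp]
theorem eval_bumpPoly (θ₀ x : ℝ) (k : ℕ) : (bumpPoly θ₀ k).eval x = (θ₀ ^ 2 - x ^ 2) ^ k := by
  simp [bumpPoly]

theorem pow_dvd_bumpPoly (θ₀ : ℝ) (k : ℕ) :
    (X - C θ₀) ^ k ∣ bumpPoly θ₀ k ∧ (X - C (-θ₀)) ^ k ∣ bumpPoly θ₀ k := by
  constructor <;> refine pow_dvd_pow_of_dvd ?_ k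
  · exact ⟨-(X + C θ₀), by simp only [map_pow]; ring⟩
  · exact ⟨C θ₀ - X, by simp only [map_pow, map_neg]; ring⟩

theorem eval_bumpPoly_mem_Icc {θ₀ x : ℝ} (hx : x ∈ Icc (-θ₀) θ₀) (k : ℕ) :
    (bumpPoly θ₀ k).eval x ∈ Icc 0 ((θ₀ ^ 2) ^ k) := by
  have hx2 : x ^ 2 ≤ θ₀ ^ 2 := sq_le_sq' hx.1 hx.2
  rw [eval_bumpPoly]
  exact ⟨pow_nonneg (by linarith) k, pow_le_pow_left₀ (by linarith) (by nlinarith) k⟩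

theorem le_eval_bumpPoly {θ₀ x : ℝ} (hx : x ∈ Icc (-(θ₀ / 2)) (θ₀ / 2)) (k : ℕ) :
    (3 / 4 * θ₀ ^ 2) ^ k ≤ (bumpPoly θ₀ k).eval x := by
  have hx2 : x ^ 2 ≤ (θ₀ / 2) ^ 2 := sq_le_sq' hx.1 hx.2
  rw [eval_bumpPoly]
  exact pow_le_pow_left₀ (by positivity) (by linarith) k

theorem exists_abs_integral_bumpPoly_mul_cos_le {θ₀ : ℝ} (hθ₀ : 0 ≤ θ₀) (k : ℕ) :
    ∃ A, ∀ t ≠ 0,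
      |∫ x in -θ₀..θ₀, (bumpPoly θ₀ k).eval x * Real.cos (t * x)| ≤ A / |t| ^ k := by
  obtain ⟨B, hB⟩ := isCompact_Icc.exists_bound_of_continuousOn
    (derivative^[k] (bumpPoly θ₀ k)).continuous.continuousOn
  have hroot (j : ℕ) (hj : j < k) : (derivative^[j] (bumpPoly θ₀ k)).IsRoot (-θ₀) ∧
      (derivative^[j] (bumpPoly θ₀ k)).IsRoot θ₀ :=
    ⟨isRoot_iterate_derivative_of_pow_dvd (pow_dvd_bumpPoly θ₀ k).2 hj,
      isRoot_iterate_derivative_of_pow_dvd (pow_dvd_bumpPoly θ₀ k).1 hj⟩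
  refine ⟨(θ₀ - -θ₀) * B, fun t ht => ?_⟩
  have hre (x : ℝ) : (bumpPoly θ₀ k).eval x * Real.cos (t * x) =
      ((((bumpPoly θ₀ k).eval x : ℝ) : ℂ) * cexp (t * x * I)).re := by
    rw [← ofReal_mul, re_ofReal_mul, exp_ofReal_mul_I_re]
  simp_rw [hre]
  refine (abs_intervalIntegral_re_le_norm
    ((by fun_prop : Continuous _).intervalIntegrable _ _)).trans
    (norm_integral_eval_mul_cexp_le (by linarith) ht k _ hroot fun x hx => ?_)
  simpa using hB x hx

theorem summable_abs_mul_abs_integral_bumpPoly_mul_cos {c : ℕ → ℝ} {k : ℕ}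
    (hck : Summable fun n => |c n| / (n : ℝ) ^ k) {θ₀ : ℝ} (hθ₀ : 0 ≤ θ₀) :
    Summable fun n : ℕ =>
      |c n| * |∫ x in -θ₀..θ₀, (bumpPoly θ₀ k).eval x * Real.cos (n * x)| := by
  obtain ⟨A, hA⟩ := exists_abs_integral_bumpPoly_mul_cos_le hθ₀ k
  refine (hck.mul_left A).of_norm_bounded_eventually_nat ?_
  filter_upwards [eventually_ne_atTop 0] with n hn
  have hIn := hA n (Nat.cast_ne_zero.mpr hn)
  rw [Nat.abs_cast] at hIn
  calc _ ≤ |c n| * (A / (n : ℝ) ^ k) := by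
        rw [Real.norm_of_nonneg (by positivity)]; gcongr
    _ = A * (|c n| / (n : ℝ) ^ k) := by ring

theorem hasSum_mul_pow_mul_cos {c : ℕ → ℝ} {r θ : ℝ} {w : ℂ}
    (h : HasSum (fun n => (c n : ℂ) * (r * cexp (θ * I)) ^ n) w) :
    HasSum (fun n => c n * r ^ n * Real.cos (n * θ)) w.re := by
  refine (hasSum_re h).congr_fun fun n => ?_
  rw [mul_pow, ← exp_nat_mul, ← ofReal_pow, ← mul_assoc, ← ofReal_mul,
    re_ofReal_mul, ← mul_assoc, ← ofReal_natCast, ← ofReal_mul, exp_ofReal_mul_I_re]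

theorem summable_abs_mul_pow_of_summable_abs_div_pow {c : ℕ → ℝ} {k : ℕ}
    (hc : Summable fun n => |c n| / (n : ℝ) ^ k) {r : ℝ} (hr0 : 0 ≤ r) (hr1 : r < 1) :
    Summable fun n => |c n| * r ^ n := by
  have hgeom := summable_pow_mul_geometric_of_norm_lt_one k (r := r)
    (by rwa [Real.norm_of_nonneg hr0])
  refine (hgeom.mul_left (∑' n, |c n| / (n : ℝ) ^ k)).of_norm_bounded_eventually_nat ?_
  filter_upwards [eventually_ne_atTop 0] with n hn
  have hnk : (0 : ℝ) < (n : ℝ) ^ k := by positivity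
  calc ‖|c n| * r ^ n‖ = |c n| / (n : ℝ) ^ k * ((n : ℝ) ^ k * r ^ n) := by
        rw [Real.norm_of_nonneg (by positivity)]; field_simp
    _ ≤ (∑' n, |c n| / (n : ℝ) ^ k) * ((n : ℝ) ^ k * r ^ n) := by
        gcongr
        exact hc.le_tsum n fun j _ => by positivity

section CosineSeries

variable {a : ℕ → ℝ} {v : ℝ → ℝ}

theorem continuous_of_hasSum_mul_cos (ha : Summable fun n => |a n|)
    (hv : ∀ x, HasSum (fun n => a n * Real.cos (n * x)) (v x)) : Continuous v := by
  rw [show v = fun x => ∑' n, a n * Real.cos (n * x) from funext fun x => (hv x).tsum_eq.symm]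
  refine continuous_tsum (fun n => by fun_prop) ha fun n x => ?_
  simpa [abs_mul] using mul_le_of_le_one_right (abs_nonneg (a n)) (Real.abs_cos_le_one _)

theorem hasSum_integral_mul_of_hasSum_mul_cos (ha : Summable fun n => |a n|)
    (hv : ∀ x, HasSum (fun n => a n * Real.cos (n * x)) (v x)) {φ : ℝ → ℝ} (hφ : Continuous φ)
    (α β : ℝ) :
    HasSum (fun n => a n * ∫ x in α..β, φ x * Real.cos (n * x)) (∫ x in α..β, v x * φ x) := by
  have hlim : ∀ x, HasSum (fun n => a n * Real.cos (n * x) * φ x) (v x * φ x) :=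
    fun x => (hv x).mul_right _
  have := intervalIntegral.hasSum_integral_of_dominated_convergence (μ := volume) (a := α)
    (b := β) (fun n x => |a n| * |φ x|)
    (fun n => (by fun_prop : Continuous fun x => a n * Real.cos (n * x) * φ x).aestronglyMeasurable)
    (fun n => ae_of_all _ fun x _ => ?_) (ae_of_all _ fun x _ => ha.mul_right _) ?_
    (ae_of_all _ fun x _ => hlim x)
  · refine this.congr_fun fun n => ?_
    rw [← intervalIntegral.integral_const_mul]
    congr 1 with x
    ring
  · simpa [abs_mul, mul_assoc] using mul_le_mul_of_nonneg_left
      (mul_le_of_le_one_left (abs_nonneg _) (Real.abs_cos_le_one _)) (abs_nonneg (a n))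
  · simp_rw [tsum_mul_right]
    exact (continuous_const.mul hφ.abs).intervalIntegrable _ _

end CosineSeries

section WeightedIntegral

variable {α : Type*} [MeasurableSpace α] {μ : Measure α}

theorem integral_abs_mul_le_of_le {v g w : α → ℝ} {W : ℝ}
    (hvw : Integrable (fun x => v x * w x) μ) (hg : Integrable g μ)
    (hw : ∀ᵐ x ∂μ, 0 ≤ w x ∧ w x ≤ W) (hgv : g ≤ᵐ[μ] v) :
    ∫ x, |v x| * w x ∂μ ≤ ∫ x, v x * w x ∂μ + 2 * W * ∫ x, |g x| ∂μ := by
  rw [← integral_const_mul, ← integral_add hvw (hg.abs.const_mul _)]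
  refine integral_mono_ae (hvw.abs.congr ?_) (hvw.add (hg.abs.const_mul _)) ?_
  · filter_upwards [hw] with x hx
    rw [abs_mul, abs_of_nonneg hx.1]
  · filter_upwards [hw, hgv] with x ⟨hw0, hwW⟩ hgvx
    rcases le_total 0 (v x) with hv | hv
    · rw [abs_of_nonneg hv]
      nlinarith [abs_nonneg (g x)]
    · -- on `{v < 0}`, `|v| = v + 2 (-v)` and `0 ≤ -v ≤ |g|`
      rw [abs_of_nonpos hv]
      nlinarith [neg_abs_le (g x), mul_le_mul_of_nonneg_left hwW (abs_nonneg (g x))]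

theorem mul_setIntegral_le_setIntegral_mul {f w : α → ℝ} {s t : Set α} {δ : ℝ}
    (hs : MeasurableSet s) (ht : MeasurableSet t) (hts : t ⊆ s)
    (hf : IntegrableOn f t μ) (hfw : IntegrableOn (fun x => f x * w x) s μ)
    (hf0 : ∀ x ∈ s, 0 ≤ f x) (hw0 : ∀ x ∈ s, 0 ≤ w x) (hδ : ∀ x ∈ t, δ ≤ w x) :
    δ * ∫ x in t, f x ∂μ ≤ ∫ x in s, f x * w x ∂μ := by
  rw [← integral_const_mul]
  refine (setIntegral_mono_on (hf.const_mul δ) (hfw.mono_set hts) ht fun x hx => ?_).trans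
    (setIntegral_mono_set hfw ?_ (Eventually.of_forall hts))
  · rw [mul_comm]
    exact mul_le_mul_of_nonneg_left (hδ x hx) (hf0 x (hts hx))
  · exact (ae_restrict_iff' hs).mpr (ae_of_all _ fun x hx => mul_nonneg (hf0 x hx) (hw0 x hx))

end WeightedIntegral

theorem exists_lintegral_abs_le_of_hasSum_mul_pow_mul_cos {c : ℕ → ℝ} {k : ℕ}
    (hck : Summable fun n => |c n| / (n : ℝ) ^ k) {θ₀ : ℝ} (hθ₀ : 0 < θ₀) {g : ℝ → ℝ}
    (hg : IntegrableOn g (Ioo (-θ₀) θ₀)) :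
    ∃ M : ℝ, ∀ r ∈ Ioo (0 : ℝ) 1, ∀ v : ℝ → ℝ,
      (∀ θ, HasSum (fun n => c n * r ^ n * Real.cos (n * θ)) (v θ)) →
      (∀ᵐ θ ∂(volume.restrict (Ioo (-θ₀) θ₀)), g θ ≤ v θ) →
      ∫⁻ θ in Ioo (-(θ₀ / 2)) (θ₀ / 2), ENNReal.ofReal |v θ| ≤ ENNReal.ofReal M := by
  set p := bumpPoly θ₀ k
  set I : ℕ → ℝ := fun n => ∫ x in -θ₀..θ₀, p.eval x * Real.cos (n * x)
  have hI_summable := summable_abs_mul_abs_integral_bumpPoly_mul_cos hck hθ₀.le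
  refine ⟨(∑' n, |c n| * |I n| + 2 * (θ₀ ^ 2) ^ k * ∫ θ in Ioo (-θ₀) θ₀, |g θ|) /
    (3 / 4 * θ₀ ^ 2) ^ k, ?_⟩
  rintro r ⟨hr0, hr1⟩ v hv hgv
  have ha : Summable fun n => |c n * r ^ n| := by
    simpa [abs_mul, abs_of_pos hr0] using
      summable_abs_mul_pow_of_summable_abs_div_pow hck hr0.le hr1
  have hv_cont := continuous_of_hasSum_mul_cos ha hv
  have hvp : ∫ x in Ioo (-θ₀) θ₀, v x * p.eval x ≤ ∑' n, |c n| * |I n| := by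
    rw [← integral_Ioc_eq_integral_Ioo, ← intervalIntegral.integral_of_le (by linarith)]
    refine (le_abs_self _).trans ((hasSum_integral_mul_of_hasSum_mul_cos ha hv p.continuous _ _
      ).norm_le_of_bounded hI_summable.hasSum fun n => ?_)
    rw [norm_mul, Real.norm_eq_abs, abs_mul, abs_pow, abs_of_pos hr0]
    gcongr
    · exact mul_le_of_le_one_right (abs_nonneg _) (pow_le_one₀ hr0.le hr1.le)
    · exact (Real.norm_eq_abs _).le
  have hweighted := integral_abs_mul_le_of_le (μ := volume.restrict (Ioo (-θ₀) θ₀))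
    ((hv_cont.mul p.continuous).integrableOn_Icc.mono_set Ioo_subset_Icc_self) hg
    ((ae_restrict_iff' measurableSet_Ioo).mpr (ae_of_all _ fun x hx =>
      eval_bumpPoly_mem_Icc (Ioo_subset_Icc_self hx) k)) hgv
  have hinner := mul_setIntegral_le_setIntegral_mul (μ := volume) (w := fun x => p.eval x)
    measurableSet_Ioo measurableSet_Ioo (Ioo_subset_Ioo (by linarith) (by linarith))
    (hv_cont.abs.integrableOn_Icc.mono_set Ioo_subset_Icc_self)
    ((hv_cont.abs.mul p.continuous).integrableOn_Icc.mono_set Ioo_subset_Icc_self)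
    (fun x _ => abs_nonneg (v x))
    (fun x hx => (eval_bumpPoly_mem_Icc (Ioo_subset_Icc_self hx) k).1)
    (fun x hx => le_eval_bumpPoly (Ioo_subset_Icc_self hx) k)
  rw [← ofReal_integral_eq_lintegral_ofReal
    (hv_cont.abs.integrableOn_Icc.mono_set Ioo_subset_Icc_self)
    (ae_of_all _ fun _ => abs_nonneg _)]
  refine ENNReal.ofReal_le_ofReal ((le_div_iff₀ (by positivity)).mpr ?_)
  linarith

/-- Remark 6.1 (second part, power series analog): if the real coefficients of
`F(z) = Σ cₙ zⁿ` satisfy `Σ |cₙ|/n^k < ∞` and `U = Re F` admits an `L¹` lower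
bound on a sector, then the `L¹` means of `U` over `(-θ₀/2, θ₀/2)` are
uniformly bounded for `0 < r < 1`. -/
theorem remark_b2_covers_Koga_powerSeries (c : ℕ → ℝ) (F : ℂ → ℂ)
    (hF : ∀ z : ℂ, ‖z‖ < 1 → HasSum (fun n : ℕ => (c n : ℂ) * z ^ n) (F z))
    (k : ℕ) (hck : Summable (fun n : ℕ => |c n| / (n : ℝ) ^ k))
    (U : ℂ → ℝ) (hU : ∀ z : ℂ, U z = (F z).re)
    (θ₀ : ℝ) (hθ₀ : θ₀ ∈ Ioo 0 Real.pi)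
    (g : ℝ → ℝ) (hg : IntegrableOn g (Ioo (-θ₀) θ₀))
    (hlow : ∀ r ∈ Ico (0 : ℝ) 1, ∀ᵐ θ ∂(volume.restrict (Ioo (-θ₀) θ₀)),
      g θ ≤ U (r * Complex.exp (θ * Complex.I))) :
    ∃ M : ℝ, ∀ r ∈ Ioo (0 : ℝ) 1,
      (∫⁻ θ in Ioo (-(θ₀ / 2)) (θ₀ / 2),
          ENNReal.ofReal |U (r * Complex.exp (θ * Complex.I))|)
        ≤ ENNReal.ofReal M := by
  obtain ⟨M, hM⟩ := exists_lintegral_abs_le_of_hasSum_mul_pow_mul_cos hck hθ₀.1 hg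
  refine ⟨M, fun r hr => hM r hr _ (fun θ => ?_) (hlow r (Ioo_subset_Ico_self hr))⟩
  have hz : ‖(r : ℂ) * cexp (θ * I)‖ < 1 := by
    rw [norm_mul, norm_exp_ofReal_mul_I, mul_one, norm_real, Real.norm_of_nonneg hr.1.le]
    exact hr.2
  rw [hU]
  exact hasSum_mul_pow_mul_cos (hF _ hz)
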